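/- arXiv:2505.20950 — 2 statements merged into one kernel-verified Lean document; each statement's English description precedes it below -/
import Mathlib

section
/- (Inverse formula) If the kernel family {γ_ω}_{ω∈Ω} over a measure space (Ω,μ) satisfies the Calderón condition ∫_Ω |γ_ω(r)|² dμ(ω) = 1 for all r ∈ {1,…,k}, then for all f ∈ L²(G) and all x ∈ G: f(x) = (1/|G|) Σ_{h∈G} ∫_Ω W_γ f(ω,h) ψ_{γ_ω}†(h⁻¹x) dμ(ω), where W_γ f(ω,h) = (f ∗ ψ_{γ_ω})(h) and ψ†(y) = conj(ψ(y⁻¹)). -/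
open scoped BigOperators
open MeasureTheory

noncomputable def conv {G : Type*} [Group G] [Fintype G] (f g : G → ℂ) : G → ℂ :=
  fun x => (Fintype.card G : ℂ)⁻¹ * ∑ y, f y * g (y⁻¹ * x)

noncomputable def nsq {G : Type*} [Fintype G] (f : G → ℂ) : ℝ :=
  (Fintype.card G : ℝ)⁻¹ * ∑ x, Complex.normSq (f x)

noncomputable def ip {G : Type*} [Fintype G] (f g : G → ℂ) : ℂ :=
  (Fintype.card G : ℂ)⁻¹ * ∑ x, f x * (starRingEnd ℂ) (g x)

noncomputable def gwavelet {G : Type*} [Group G] {k : ℕ} (d : Fin k → ℕ)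
    (π : (r : Fin k) → G →* Matrix (Fin (d r)) (Fin (d r)) ℂ)
    (γ : Fin k → ℂ) : G → ℂ :=
  fun x => ∑ r, (d r : ℂ) * γ r * Matrix.trace (π r x)

noncomputable def Upath {G : Type*} [Group G] [Fintype G] {J : ℕ}
    (ψ : Fin J → G → ℂ) : List (Fin J) → (G → ℂ) → G → ℂ
  | [], f => f
  | j :: p, f => Upath ψ p fun x => ((‖conv (ψ j) f x‖ : ℝ) : ℂ)

noncomputable def Sop {G : Type*} [Group G] [Fintype G] {k J : ℕ} (d : Fin k → ℕ)
    (π : (r : Fin k) → G →* Matrix (Fin (d r)) (Fin (d r)) ℂ)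
    (γ : Fin (J + 1) → Fin k → ℂ) (p : List (Fin J)) (f : G → ℂ) : G → ℂ :=
  conv (gwavelet d π (γ 0)) (Upath (fun j => gwavelet d π (γ j.succ)) p f)

/-!
The G-wavelet map `γ ↦ ψ_γ` turns pointwise products of kernels into convolutions: by Schur's
lemma the irreducible characters satisfy `χ_r ∗ χ_s = δ_rs χ_r / d_r`, so `ψ_γ ∗ ψ_γ' = ψ_{γγ'}`,
and unitarity gives `ψ_γ† = ψ_{conj γ}`. Hence the sum over `h` is
`(f ∗ ψ_{γ_ω} ∗ ψ_{γ_ω}†)(x) = (f ∗ ψ_{|γ_ω|²})(x)`, which is linear in the `|γ_ω(r)|²`.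
Integrating with the Calderón condition leaves `(f ∗ ψ_1)(x)`, and `ψ_1 = Σ_r d_r χ_r = |G| δ_1`
is the second orthogonality relation, which holds because there are as many irreducible
characters as conjugacy classes.
-/

section Convolution

variable {G : Type*} [Group G] [Fintype G]

theorem conv_assoc (f g h : G → ℂ) : conv (conv f g) h = conv f (conv g h) := by
  funext x
  simp only [conv, Finset.sum_mul, Finset.mul_sum, ← mul_assoc]
  rw [Finset.sum_comm]
  refine Finset.sum_congr rfl fun y _ => Fintype.sum_equiv (Equiv.mulLeft y⁻¹) _ _ fun z => ?_
  simp only [Equiv.coe_mulLeft, mul_inv_rev, mul_assoc, inv_mul_cancel_left]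
  ring

theorem conv_sum_right {ι : Type*} (s : Finset ι) (f : G → ℂ) (g : ι → G → ℂ) :
    conv f (∑ i ∈ s, g i) = ∑ i ∈ s, conv f (g i) := by
  funext x
  simp only [conv, Finset.sum_apply, Finset.mul_sum]
  exact Finset.sum_comm

theorem conv_smul_right (f g : G → ℂ) (c : ℂ) : conv f (c • g) = c • conv f g := by
  funext x
  simp only [conv, Pi.smul_apply, smul_eq_mul, Finset.mul_sum]
  exact Finset.sum_congr rfl fun y _ => by ring

theorem conv_sum_left {ι : Type*} (s : Finset ι) (f : ι → G → ℂ) (g : G → ℂ) :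
    conv (∑ i ∈ s, f i) g = ∑ i ∈ s, conv (f i) g := by
  funext x
  simp only [conv, Finset.sum_apply, Finset.sum_mul, Finset.mul_sum]
  exact Finset.sum_comm

theorem conv_smul_left (f g : G → ℂ) (c : ℂ) : conv (c • f) g = c • conv f g := by
  funext x
  simp only [conv, Pi.smul_apply, smul_eq_mul, Finset.mul_sum]
  exact Finset.sum_congr rfl fun y _ => by ring

theorem conv_card_delta [DecidableEq G] (f : G → ℂ) :
    conv f (fun z => if z = 1 then (Fintype.card G : ℂ) else 0) = f := by
  funext x
  have hG : (Fintype.card G : ℂ) ≠ 0 := Nat.cast_ne_zero.mpr Fintype.card_ne_zero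
  simp only [conv, inv_mul_eq_one, mul_ite, mul_zero, Finset.sum_ite_eq', Finset.mem_univ,
    if_true]
  field_simp

end Convolution

theorem Matrix.trace_mul_trace_eq_sum_single {R m n : Type*} [Semiring R] [Fintype m]
    [DecidableEq m] [Fintype n] [DecidableEq n] (P : Matrix m m R) (Q : Matrix n n R) :
    P.trace * Q.trace = ∑ a, ∑ e, (P * (single a e 1 : Matrix m n R) * Q) a e := by
  have entry (a : m) (e : n) : (P * (single a e 1 : Matrix m n R) * Q) a e = P a a * Q e e := by
    rw [mul_apply, Finset.sum_eq_single e
      (fun j _ hj => by rw [mul_single_apply_of_ne _ _ _ _ _ hj, zero_mul]) (by simp),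
      mul_single_apply_same, mul_one]
  simp only [entry, trace, diag, Finset.sum_mul_sum]

section MatrixRepresentation

open Matrix

variable {G : Type*} [Group G] {m n : Type*} [Fintype m] [DecidableEq m] [Fintype n] [DecidableEq n]

def matrixCharacter (ρ : G →* Matrix m m ℂ) (g : G) : ℂ := (ρ g).trace

def HasScalarCommutant (ρ : G →* Matrix m m ℂ) : Prop :=
  ∀ M : Matrix m m ℂ, (∀ x, M * ρ x = ρ x * M) → ∃ c : ℂ, M = c • 1

def HasNoNonzeroIntertwiner (ρ : G →* Matrix m m ℂ) (σ : G →* Matrix n n ℂ) : Prop :=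
  ∀ T : Matrix m n ℂ, (∀ x, ρ x * T = T * σ x) → T = 0

variable [Fintype G] in
def intertwinerAverage (ρ : G →* Matrix m m ℂ) (σ : G →* Matrix n n ℂ) (A : Matrix m n ℂ) :
    Matrix m n ℂ :=
  ∑ y, ρ y * A * σ y⁻¹

variable (ρ : G →* Matrix m m ℂ) (σ : G →* Matrix n n ℂ)

theorem matrixCharacter_one : matrixCharacter ρ 1 = Fintype.card m := by
  simp [matrixCharacter]

theorem matrixCharacter_eq_of_isConj {a b : G} (hab : IsConj a b) :
    matrixCharacter ρ a = matrixCharacter ρ b := by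
  obtain ⟨g, rfl⟩ := isConj_iff.mp hab
  rw [matrixCharacter, matrixCharacter, map_mul, map_mul, trace_mul_cycle, ← map_mul,
    inv_mul_cancel, map_one, one_mul]

variable {ρ σ}

theorem map_inv_eq_star_of_unitary (hρ : ∀ g, ρ g ∈ unitaryGroup m ℂ) (g : G) :
    ρ g⁻¹ = star (ρ g) :=
  left_inv_eq_right_inv (by rw [← map_mul, inv_mul_cancel, map_one]) (hρ g).2

theorem conj_matrixCharacter (hρ : ∀ g, ρ g ∈ unitaryGroup m ℂ) (g : G) :
    starRingEnd ℂ (matrixCharacter ρ g) = matrixCharacter ρ g⁻¹ := by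
  rw [matrixCharacter, matrixCharacter, map_inv_eq_star_of_unitary hρ, star_eq_conjTranspose,
    trace_conjTranspose]
  rfl

variable [Fintype G]

theorem intertwinerAverage_intertwines (A : Matrix m n ℂ) (g : G) :
    ρ g * intertwinerAverage ρ σ A = intertwinerAverage ρ σ A * σ g := by
  rw [intertwinerAverage, Matrix.mul_sum, Matrix.sum_mul]
  refine Fintype.sum_equiv (Equiv.mulLeft g) _ _ fun y => ?_
  simp only [Equiv.coe_mulLeft, _root_.mul_inv_rev, map_mul, Matrix.mul_assoc]
  rw [← map_mul σ g⁻¹, inv_mul_cancel, map_one, Matrix.mul_one]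

theorem intertwinerAverage_eq_zero (hneq : HasNoNonzeroIntertwiner ρ σ) (A : Matrix m n ℂ) :
    intertwinerAverage ρ σ A = 0 :=
  hneq _ (intertwinerAverage_intertwines A)

theorem trace_intertwinerAverage_self (A : Matrix m m ℂ) :
    (intertwinerAverage ρ ρ A).trace = Fintype.card G * A.trace := by
  simp only [intertwinerAverage, trace_sum, trace_mul_cycle (ρ _), ← map_mul, inv_mul_cancel,
    map_one, one_mul, Finset.sum_const, Finset.card_univ, nsmul_eq_mul]

theorem intertwinerAverage_self_eq_smul_one (hirr : HasScalarCommutant ρ) (A : Matrix m m ℂ) :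
    intertwinerAverage ρ ρ A = (Fintype.card G * A.trace / Fintype.card m) • 1 := by
  rcases isEmpty_or_nonempty m with hm | hm
  · exact Subsingleton.elim _ _
  obtain ⟨c, hc⟩ := hirr _ fun g => (intertwinerAverage_intertwines A g).symm
  have htrace := trace_intertwinerAverage_self (ρ := ρ) A
  rw [hc, trace_smul, trace_one, smul_eq_mul] at htrace
  rw [hc, ← htrace, mul_div_cancel_right₀ _ (Nat.cast_ne_zero.mpr Fintype.card_ne_zero)]

/-- Linearizing the product of traces lets Schur's lemma act on averaged matrix units. -/
theorem sum_matrixCharacter_mul_matrixCharacter_inv_mul (x : G) :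
    ∑ y, matrixCharacter ρ y * matrixCharacter σ (y⁻¹ * x)
      = ∑ a, ∑ e, (intertwinerAverage ρ σ (single a e 1) * σ x) a e := by
  simp only [matrixCharacter, map_mul, trace_mul_trace_eq_sum_single, intertwinerAverage,
    Matrix.sum_mul, Matrix.sum_apply, ← Matrix.mul_assoc]
  rw [Finset.sum_comm]
  exact Finset.sum_congr rfl fun a _ => Finset.sum_comm

theorem conv_matrixCharacter_eq_zero (hneq : HasNoNonzeroIntertwiner ρ σ) :
    conv (matrixCharacter ρ) (matrixCharacter σ) = 0 := by
  funext x
  simp [conv, sum_matrixCharacter_mul_matrixCharacter_inv_mul,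
    intertwinerAverage_eq_zero hneq]

theorem conv_matrixCharacter_self (hirr : HasScalarCommutant ρ) :
    conv (matrixCharacter ρ) (matrixCharacter ρ) = (Fintype.card m : ℂ)⁻¹ • matrixCharacter ρ := by
  funext x
  have hG : (Fintype.card G : ℂ) ≠ 0 := Nat.cast_ne_zero.mpr Fintype.card_ne_zero
  have htrace (a e : m) : (single a e (1 : ℂ)).trace = if a = e then 1 else 0 := by
    split_ifs with h
    · rw [h, trace_single_eq_same]
    · exact trace_single_eq_of_ne _ _ _ h
  rw [conv, sum_matrixCharacter_mul_matrixCharacter_inv_mul]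
  simp only [intertwinerAverage_self_eq_smul_one hirr, Matrix.smul_mul, Matrix.one_mul,
    Matrix.smul_apply, smul_eq_mul, htrace, mul_ite, mul_one, mul_zero, ite_div, zero_div, ite_mul,
    zero_mul, Finset.sum_ite_eq, Finset.mem_univ, if_true, ← Finset.mul_sum]
  simp only [Pi.smul_apply, smul_eq_mul, matrixCharacter, trace, diag]
  field_simp

theorem sum_matrixCharacter_mul_conj_eq_card_mul_conv (hσ : ∀ g, σ g ∈ unitaryGroup n ℂ) :
    ∑ y, matrixCharacter ρ y * starRingEnd ℂ (matrixCharacter σ y)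
      = Fintype.card G * conv (matrixCharacter ρ) (matrixCharacter σ) 1 := by
  have hG : (Fintype.card G : ℂ) ≠ 0 := Nat.cast_ne_zero.mpr Fintype.card_ne_zero
  simp only [conv, mul_one, conj_matrixCharacter hσ, mul_inv_cancel_left₀ hG]

end MatrixRepresentation

section ColumnOrthogonality

open Finset

variable {G : Type*} [Group G] [Fintype G]

open Classical in
theorem sum_comp_conjClassesMk (F : ConjClasses G → ℂ) :
    ∑ z, F (ConjClasses.mk z) = ∑ c, (#{z | ConjClasses.mk z = c} : ℂ) * F c := by
  rw [sum_comp, image_univ_of_surjective ConjClasses.mk_surjective]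
  simp only [nsmul_eq_mul]

open Classical in
/-- Second orthogonality relation: a square orthogonal "character table" also has orthogonal
columns, since a one-sided inverse of a square matrix is two-sided. -/
theorem card_isConj_mul_sum_conj_mul_eq {ι : Type*} [Fintype ι] [DecidableEq ι]
    (χ : ι → G → ℂ) (hclass : ∀ i a b, IsConj a b → χ i a = χ i b)
    (hcard : Nat.card (ConjClasses G) = Fintype.card ι)
    (horth : ∀ i j, ∑ y, χ i y * starRingEnd ℂ (χ j y) = if i = j then (Fintype.card G : ℂ) else 0)
    (x y : G) :
    (#{z | IsConj x z} : ℂ) * ∑ i, starRingEnd ℂ (χ i x) * χ i y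
      = if IsConj x y then (Fintype.card G : ℂ) else 0 := by
  have hG : (Fintype.card G : ℂ) ≠ 0 := Nat.cast_ne_zero.mpr Fintype.card_ne_zero
  let χ' (i : ι) : ConjClasses G → ℂ := Quotient.lift (χ i) (hclass i)
  let w (c : ConjClasses G) : ℂ := #{z | ConjClasses.mk z = c}
  let A : Matrix ι (ConjClasses G) ℂ := Matrix.of fun i c => χ' i c
  let B : Matrix (ConjClasses G) ι ℂ :=
    Matrix.of fun c j => w c / Fintype.card G * starRingEnd ℂ (χ' j c)
  have hAB : A * B = 1 := by
    ext i j
    have h := (sum_comp_conjClassesMk fun c => χ' i c * starRingEnd ℂ (χ' j c)).symm.trans (horth i j)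
    calc (A * B) i j = (Fintype.card G : ℂ)⁻¹ * ∑ c, w c * (χ' i c * starRingEnd ℂ (χ' j c)) := by
          rw [Matrix.mul_apply, mul_sum]
          exact sum_congr rfl fun c _ => by simp only [A, B, Matrix.of_apply]; ring
      _ = (1 : Matrix ι ι ℂ) i j := by
          rw [h, Matrix.one_apply]
          split_ifs <;> simp [hG]
  have e : ι ≃ ConjClasses G :=
    Fintype.equivOfCardEq (by rw [← hcard, Nat.card_eq_fintype_card])
  have hBA := congrFun (congrFun ((Matrix.mul_eq_one_comm_of_equiv e).mp hAB)
    (ConjClasses.mk x)) (ConjClasses.mk y)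
  rw [Matrix.mul_apply, Matrix.one_apply] at hBA
  simp only [ConjClasses.mk_eq_mk_iff_isConj] at hBA
  have hw : w (ConjClasses.mk x) = #{z | IsConj x z} := by
    simp only [w, ConjClasses.mk_eq_mk_iff_isConj, isConj_comm]
  calc (#{z | IsConj x z} : ℂ) * ∑ i, starRingEnd ℂ (χ i x) * χ i y
      = Fintype.card G * ∑ i, B (ConjClasses.mk x) i * A i (ConjClasses.mk y) := by
        rw [mul_sum, mul_sum, ← hw]
        exact sum_congr rfl fun i _ => by simp only [A, B, Matrix.of_apply]; field_simp; rfl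
    _ = if IsConj x y then (Fintype.card G : ℂ) else 0 := by
        rw [hBA]
        split_ifs <;> simp

end ColumnOrthogonality

section Wavelet

variable {G : Type*} [Group G] {k : ℕ} {d : Fin k → ℕ}
  {π : (r : Fin k) → G →* Matrix (Fin (d r)) (Fin (d r)) ℂ}

theorem gwavelet_eq_sum (γ : Fin k → ℂ) :
    gwavelet d π γ = ∑ r, ((d r : ℂ) * γ r) • matrixCharacter (π r) := by
  funext x
  simp [gwavelet, Finset.sum_apply, matrixCharacter]

theorem gwavelet_apply (γ : Fin k → ℂ) (x : G) :
    gwavelet d π γ x = ∑ r, γ r * ((d r : ℂ) * matrixCharacter (π r) x) :=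
  Finset.sum_congr rfl fun r _ => by rw [matrixCharacter]; ring

theorem gwavelet_inv_conj (hunit : ∀ r x, π r x ∈ Matrix.unitaryGroup (Fin (d r)) ℂ)
    (γ : Fin k → ℂ) :
    (fun y => starRingEnd ℂ (gwavelet d π γ y⁻¹)) = gwavelet d π fun r => starRingEnd ℂ (γ r) := by
  funext y
  simp only [gwavelet_apply, map_sum, map_mul, map_natCast, conj_matrixCharacter (hunit _), inv_inv]

variable [Fintype G]

theorem conv_matrixCharacter_eq_ite (hirr : ∀ r, HasScalarCommutant (π r))
    (hneq : ∀ r s, r ≠ s → HasNoNonzeroIntertwiner (π r) (π s)) (r s : Fin k) :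
    conv (matrixCharacter (π r)) (matrixCharacter (π s))
      = if r = s then (d r : ℂ)⁻¹ • matrixCharacter (π r) else 0 := by
  rcases eq_or_ne r s with rfl | hrs
  · rw [if_pos rfl, conv_matrixCharacter_self (hirr r), Fintype.card_fin]
  · rw [if_neg hrs, conv_matrixCharacter_eq_zero (hneq r s hrs)]

theorem sum_matrixCharacter_mul_conj_eq_ite (hdpos : ∀ r, 0 < d r)
    (hunit : ∀ r x, π r x ∈ Matrix.unitaryGroup (Fin (d r)) ℂ)
    (hirr : ∀ r, HasScalarCommutant (π r))
    (hneq : ∀ r s, r ≠ s → HasNoNonzeroIntertwiner (π r) (π s)) (r s : Fin k) :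
    ∑ y, matrixCharacter (π r) y * starRingEnd ℂ (matrixCharacter (π s) y)
      = if r = s then (Fintype.card G : ℂ) else 0 := by
  rw [sum_matrixCharacter_mul_conj_eq_card_mul_conv (hunit s),
    conv_matrixCharacter_eq_ite hirr hneq]
  split_ifs
  · have hd : (d r : ℂ) ≠ 0 := Nat.cast_ne_zero.mpr (hdpos r).ne'
    simp [matrixCharacter_one, hd]
  · simp

theorem conv_gwavelet_apply (f : G → ℂ) (γ : Fin k → ℂ) (x : G) :
    conv f (gwavelet d π γ) x = ∑ r, γ r * ((d r : ℂ) * conv f (matrixCharacter (π r)) x) := by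
  simp only [gwavelet_eq_sum, conv_sum_right, conv_smul_right, Finset.sum_apply, Pi.smul_apply,
    smul_eq_mul]
  exact Finset.sum_congr rfl fun r _ => by ring

theorem conv_gwavelet_gwavelet (hirr : ∀ r, HasScalarCommutant (π r))
    (hneq : ∀ r s, r ≠ s → HasNoNonzeroIntertwiner (π r) (π s)) (γ γ' : Fin k → ℂ) :
    conv (gwavelet d π γ) (gwavelet d π γ') = gwavelet d π (γ * γ') := by
  simp only [gwavelet_eq_sum, conv_sum_left, conv_sum_right, conv_smul_left, conv_smul_right,
    conv_matrixCharacter_eq_ite hirr hneq, smul_ite, smul_zero, Finset.sum_ite_eq',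
    Finset.mem_univ, if_true, smul_smul, Pi.mul_apply]
  refine Finset.sum_congr rfl fun r _ => congrArg (· • matrixCharacter (π r)) ?_
  rcases eq_or_ne (d r : ℂ) 0 with hd | hd
  · simp [hd]
  · field_simp

theorem gwavelet_one [DecidableEq G] (hdpos : ∀ r, 0 < d r)
    (hunit : ∀ r x, π r x ∈ Matrix.unitaryGroup (Fin (d r)) ℂ)
    (hirr : ∀ r, HasScalarCommutant (π r))
    (hneq : ∀ r s, r ≠ s → HasNoNonzeroIntertwiner (π r) (π s))
    (hcard : Nat.card (ConjClasses G) = k) :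
    gwavelet d π 1 = fun x => if x = 1 then (Fintype.card G : ℂ) else 0 := by
  funext x
  have h := card_isConj_mul_sum_conj_mul_eq (fun r => matrixCharacter (π r))
    (fun r _ _ => matrixCharacter_eq_of_isConj (π r)) (by rw [hcard, Fintype.card_fin])
    (sum_matrixCharacter_mul_conj_eq_ite hdpos hunit hirr hneq) 1 x
  simp only [isConj_one_right, Finset.filter_eq', Finset.mem_univ, if_true,
    Finset.card_singleton, Nat.cast_one, one_mul, matrixCharacter_one, Fintype.card_fin,
    map_natCast] at h
  rw [gwavelet_apply, ← h]
  simp only [Pi.one_apply, one_mul]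

theorem card_inv_mul_sum_conv_gwavelet_mul_conj
    (hunit : ∀ r x, π r x ∈ Matrix.unitaryGroup (Fin (d r)) ℂ)
    (hirr : ∀ r, HasScalarCommutant (π r))
    (hneq : ∀ r s, r ≠ s → HasNoNonzeroIntertwiner (π r) (π s))
    (f : G → ℂ) (γ : Fin k → ℂ) (x : G) :
    (Fintype.card G : ℂ)⁻¹ * ∑ h, conv f (gwavelet d π γ) h *
        starRingEnd ℂ (gwavelet d π γ ((h⁻¹ * x)⁻¹))
      = conv f (gwavelet d π fun r => (Complex.normSq (γ r) : ℂ)) x := by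
  have hself : conv (gwavelet d π γ) (fun y => starRingEnd ℂ (gwavelet d π γ y⁻¹))
      = gwavelet d π fun r => (Complex.normSq (γ r) : ℂ) := by
    rw [gwavelet_inv_conj hunit, conv_gwavelet_gwavelet hirr hneq]
    exact congrArg _ (funext fun r => Complex.mul_conj (γ r))
  rw [← hself, ← conv_assoc]
  rfl

end Wavelet

theorem integrable_sum_mul_conj_sum {ι Ω : Type*} [Fintype ι] [MeasurableSpace Ω] {μ : Measure Ω}
    {γ : Ω → ι → ℂ} (hint : ∀ r s, Integrable (fun ω => γ ω r * starRingEnd ℂ (γ ω s)) μ)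
    (a b : ι → ℂ) :
    Integrable (fun ω => (∑ r, γ ω r * a r) * starRingEnd ℂ (∑ s, γ ω s * b s)) μ := by
  simp only [map_sum, map_mul, Finset.sum_mul_sum]
  refine integrable_finsetSum _ fun r _ => integrable_finsetSum _ fun s _ =>
    ((hint r s).mul_const (a r * starRingEnd ℂ (b s))).congr (ae_of_all _ fun ω => ?_)
  ring

theorem stmt5 {G : Type*} [Group G] [Fintype G]
    {k : ℕ} (d : Fin k → ℕ) (hdpos : ∀ r, 0 < d r)
    (π : (r : Fin k) → G →* Matrix (Fin (d r)) (Fin (d r)) ℂ)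
    (hunit : ∀ r x, π r x ∈ Matrix.unitaryGroup (Fin (d r)) ℂ)
    (hirr : ∀ (r : Fin k) (M : Matrix (Fin (d r)) (Fin (d r)) ℂ),
      (∀ x, M * π r x = π r x * M) → ∃ c : ℂ, M = c • (1 : Matrix (Fin (d r)) (Fin (d r)) ℂ))
    (hneq : ∀ (r s : Fin k), r ≠ s → ∀ T : Matrix (Fin (d r)) (Fin (d s)) ℂ,
      (∀ x, π r x * T = T * π s x) → T = 0)
    (hcard : Nat.card (ConjClasses G) = k)
    {Ω : Type*} [MeasurableSpace Ω] (μ : Measure Ω)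
    (γ : Ω → Fin k → ℂ)
    (hint : ∀ r s : Fin k, Integrable (fun ω => γ ω r * (starRingEnd ℂ) (γ ω s)) μ)
    (hCalderon : ∀ r : Fin k, ∫ ω, Complex.normSq (γ ω r) ∂μ = 1)
    (f : G → ℂ) (x : G) :
    f x = (Fintype.card G : ℂ)⁻¹ * ∑ h : G,
      ∫ ω, conv f (gwavelet d π (γ ω)) h *
        (starRingEnd ℂ) (gwavelet d π (γ ω) ((h⁻¹ * x)⁻¹)) ∂μ := by
  classical
  let c (r : Fin k) : ℂ := (d r : ℂ) * conv f (matrixCharacter (π r)) x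
  have hint_h (h : G) : Integrable (fun ω => conv f (gwavelet d π (γ ω)) h *
      starRingEnd ℂ (gwavelet d π (γ ω) ((h⁻¹ * x)⁻¹))) μ := by
    simp only [conv_gwavelet_apply, gwavelet_apply]
    exact integrable_sum_mul_conj_sum hint _ _
  have hint_r (r : Fin k) : Integrable (fun ω => (Complex.normSq (γ ω r) : ℂ) * c r) μ :=
    ((hint r r).mul_const (c r)).congr (ae_of_all _ fun ω => by simp only [Complex.mul_conj])
  calc f x = conv f (gwavelet d π 1) x := by
        rw [gwavelet_one hdpos hunit hirr hneq hcard, conv_card_delta]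
    _ = ∑ r, ((∫ ω, Complex.normSq (γ ω r) ∂μ : ℝ) : ℂ) * c r := by
        simp only [conv_gwavelet_apply, hCalderon, Pi.one_apply, Complex.ofReal_one]
        rfl
    _ = ∫ ω, ∑ r, (Complex.normSq (γ ω r) : ℂ) * c r ∂μ := by
        rw [integral_finsetSum _ fun r _ => hint_r r]
        simp only [integral_mul_const, integral_complex_ofReal]
    _ = ∫ ω, (Fintype.card G : ℂ)⁻¹ * ∑ h : G, conv f (gwavelet d π (γ ω)) h *
          starRingEnd ℂ (gwavelet d π (γ ω) ((h⁻¹ * x)⁻¹)) ∂μ := by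
        refine congrArg (integral μ) (funext fun ω => ?_)
        rw [card_inv_mul_sum_conv_gwavelet_mul_conj hunit hirr hneq, conv_gwavelet_apply]
    _ = _ := by
        rw [integral_const_mul, integral_finsetSum _ fun h _ => hint_h h]
end

section
/- (Non-expansivity of the scattering transform) Under the Parseval condition Σ_{j=0}^J |γ_j(r)|² = 1 for all r, the scattering transform satisfies Σ_{m=0}^∞ Σ_{p∈{1,…,J}^m} ‖S[p]f‖² ≤ ‖f‖² for all f ∈ L²(G). -/
open scoped BigOperators
open MeasureTheory

/-!
Schur orthogonality makes the normalized matrix coefficients `√(d_r / |G|) π_r(·)ᵢⱼ` an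
orthonormal family in `ℓ²(G)`, and convolution with `ψ_γ` acts on the coefficient of `g` along
`π_r(·)ᵢⱼ` as multiplication by `γ(r)`. The Parseval condition and Bessel's inequality therefore
give `‖φ ∗ g‖² + ∑ⱼ ‖|ψⱼ ∗ g|‖² ≤ ‖g‖²` for one layer, since the modulus preserves norms.
Applying this to every node of the scattering tree shows that the energy output up to depth `m`
plus the energy still propagated at depth `m` is at most `‖f‖²`.
-/

section SchurOrthogonality

variable {G : Type*} [Group G] {m n : Type*} [Fintype m] [Fintype n] [DecidableEq m] [DecidableEq n]

lemma star_eq_map_inv {ρ : G →* Matrix m m ℂ} (hρ : ∀ x, ρ x ∈ Matrix.unitaryGroup m ℂ)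
    (x : G) : star (ρ x) = ρ x⁻¹ :=
  left_inv_eq_right_inv (Unitary.mem_iff.mp (hρ x)).1 (by rw [← map_mul, mul_inv_cancel, map_one])

lemma conj_apply_eq_map_inv_apply {ρ : G →* Matrix m m ℂ}
    (hρ : ∀ x, ρ x ∈ Matrix.unitaryGroup m ℂ) (x : G) (i j : m) :
    starRingEnd ℂ (ρ x i j) = ρ x⁻¹ j i := by
  rw [← star_eq_map_inv hρ, Matrix.star_apply]
  rfl

variable [Fintype G]

lemma sum_mul_mul_map_inv_intertwines (ρ : G →* Matrix m m ℂ) (σ : G →* Matrix n n ℂ)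
    (T : Matrix m n ℂ) (y : G) :
    ρ y * ∑ x, ρ x * T * σ x⁻¹ = (∑ x, ρ x * T * σ x⁻¹) * σ y := by
  simp only [Matrix.mul_sum, Matrix.sum_mul]
  refine Fintype.sum_equiv (Equiv.mulLeft y) _ _ fun x => ?_
  simp only [Equiv.coe_mulLeft, mul_inv_rev, map_mul, Matrix.mul_assoc]
  rw [← map_mul, inv_mul_cancel, map_one, mul_one]

lemma Matrix.mul_single_one_mul_apply {R l o : Type*} [Semiring R] (M : Matrix l m R)
    (N : Matrix n o R) (i : l) (j : m) (b : n) (a : o) :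
    (M * Matrix.single j b (1 : R) * N) i a = M i j * N b a := by
  simp [Matrix.mul_apply, Matrix.single, ite_and]

lemma sum_map_mul_single_mul_map_inv_apply {ρ : G →* Matrix m m ℂ} {σ : G →* Matrix n n ℂ}
    (hσ : ∀ x, σ x ∈ Matrix.unitaryGroup n ℂ) (i j : m) (a b : n) :
    (∑ x, ρ x * Matrix.single j b (1 : ℂ) * σ x⁻¹) i a =
      ∑ x, ρ x i j * starRingEnd ℂ (σ x a b) := by
  simp only [Matrix.sum_apply, Matrix.mul_single_one_mul_apply, conj_apply_eq_map_inv_apply hσ]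

theorem sum_mul_conj_eq_zero {ρ : G →* Matrix m m ℂ} {σ : G →* Matrix n n ℂ}
    (hσ : ∀ x, σ x ∈ Matrix.unitaryGroup n ℂ)
    (hρσ : ∀ T : Matrix m n ℂ, (∀ x, ρ x * T = T * σ x) → T = 0) (i j : m) (a b : n) :
    ∑ x, ρ x i j * starRingEnd ℂ (σ x a b) = 0 := by
  rw [← sum_map_mul_single_mul_map_inv_apply hσ,
    hρσ _ (sum_mul_mul_map_inv_intertwines ρ σ _), Matrix.zero_apply]

theorem sum_mul_conj_eq_ite {ρ : G →* Matrix m m ℂ} (hρ : ∀ x, ρ x ∈ Matrix.unitaryGroup m ℂ)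
    (hirr : ∀ M : Matrix m m ℂ, (∀ x, M * ρ x = ρ x * M) → ∃ c : ℂ, M = c • 1)
    (i j a b : m) :
    ∑ x, ρ x i j * starRingEnd ℂ (ρ x a b) =
      if i = a ∧ j = b then (Fintype.card G : ℂ) / Fintype.card m else 0 := by
  -- The average of `single j b 1` intertwines `ρ`, so it is a scalar `c`, read off from its trace.
  obtain ⟨c, hc⟩ := hirr (∑ x, ρ x * Matrix.single j b (1 : ℂ) * ρ x⁻¹) fun y =>
    (sum_mul_mul_map_inv_intertwines ρ ρ _ y).symm
  have hm : (Fintype.card m : ℂ) ≠ 0 := by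
    have : Nonempty m := ⟨i⟩
    exact_mod_cast Fintype.card_ne_zero
  have htrace : c * Fintype.card m = Fintype.card G * if j = b then 1 else 0 := by
    have hconj (x : G) :
        (ρ x * Matrix.single j b (1 : ℂ) * ρ x⁻¹).trace = if j = b then 1 else 0 := by
      rw [Matrix.trace_mul_cycle, ← map_mul, inv_mul_cancel, map_one, one_mul]
      split_ifs with h
      · rw [h, Matrix.trace_single_eq_same]
      · exact Matrix.trace_single_eq_of_ne _ _ _ h
    have := congrArg Matrix.trace hc
    simp only [Matrix.trace_sum, hconj, Finset.sum_const, Finset.card_univ, nsmul_eq_mul,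
      Matrix.trace_smul, Matrix.trace_one, smul_eq_mul] at this
    rw [← this, mul_comm]
  rw [← sum_map_mul_single_mul_map_inv_apply hρ, hc, Matrix.smul_apply, Matrix.one_apply,
    smul_eq_mul]
  by_cases hia : i = a <;> by_cases hjb : j = b <;> simp_all [eq_div_iff hm]

end SchurOrthogonality

section Energy

variable {G : Type*} [Fintype G]

lemma nsq_nonneg (f : G → ℂ) : 0 ≤ nsq f :=
  mul_nonneg (by positivity) (Finset.sum_nonneg fun x _ => Complex.normSq_nonneg _)

lemma nsq_ofReal_norm (f : G → ℂ) : nsq (fun x => ((‖f x‖ : ℝ) : ℂ)) = nsq f := by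
  simp [nsq, Complex.normSq_eq_norm_sq]

lemma nsq_eq_inv_card_mul_norm_sq (f : G → ℂ) :
    nsq f = (Fintype.card G : ℝ)⁻¹ * ‖WithLp.toLp 2 f‖ ^ 2 := by
  simp [nsq, EuclideanSpace.norm_sq_eq, Complex.normSq_eq_norm_sq]

end Energy

section Wavelets

variable {G : Type*} [Group G] {k : ℕ} {d : Fin k → ℕ}
  {π : (r : Fin k) → G →* Matrix (Fin (d r)) (Fin (d r)) ℂ}

lemma gwavelet_mul_inv (hunit : ∀ r x, π r x ∈ Matrix.unitaryGroup (Fin (d r)) ℂ)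
    (γ : Fin k → ℂ) (x z : G) :
    gwavelet d π γ (x * z⁻¹) =
      ∑ r, d r * γ r * ∑ i, ∑ j, π r x i j * starRingEnd ℂ (π r z i j) := by
  simp only [gwavelet, map_mul, Matrix.trace, Matrix.diag, Matrix.mul_apply,
    conj_apply_eq_map_inv_apply (hunit _)]

variable [Fintype G]

lemma conv_apply_eq_sum_mul_inv (f g : G → ℂ) (x : G) :
    conv f g x = (Fintype.card G : ℂ)⁻¹ * ∑ z, f (x * z⁻¹) * g z := by
  rw [conv]
  congr 1
  refine Fintype.sum_equiv ((Equiv.inv G).trans (Equiv.mulRight x)) _ _ fun y => ?_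
  simp

variable (d π) in
noncomputable def normalizedMatrixCoeff (a : (r : Fin k) × Fin (d r) × Fin (d r)) :
    EuclideanSpace ℂ G :=
  WithLp.toLp 2 fun x => (√(d a.1 / Fintype.card G) : ℂ) * π a.1 x a.2.1 a.2.2

lemma inner_normalizedMatrixCoeff (a : (r : Fin k) × Fin (d r) × Fin (d r))
    (g : EuclideanSpace ℂ G) :
    inner ℂ (normalizedMatrixCoeff d π a) g =
      √(d a.1 / Fintype.card G) * ∑ z, starRingEnd ℂ (π a.1 z a.2.1 a.2.2) * g z := by
  simp only [normalizedMatrixCoeff, PiLp.inner_apply, RCLike.inner_apply, Finset.mul_sum,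
    map_mul, Complex.conj_ofReal]
  exact Finset.sum_congr rfl fun z _ => by ring

lemma orthonormal_normalizedMatrixCoeff
    (hunit : ∀ r x, π r x ∈ Matrix.unitaryGroup (Fin (d r)) ℂ)
    (hirr : ∀ (r : Fin k) (M : Matrix (Fin (d r)) (Fin (d r)) ℂ),
      (∀ x, M * π r x = π r x * M) → ∃ c : ℂ, M = c • (1 : Matrix (Fin (d r)) (Fin (d r)) ℂ))
    (hneq : ∀ (r s : Fin k), r ≠ s → ∀ T : Matrix (Fin (d r)) (Fin (d s)) ℂ,
      (∀ x, π r x * T = T * π s x) → T = 0) :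
    Orthonormal ℂ (normalizedMatrixCoeff (G := G) d π) := by
  rw [orthonormal_iff_ite]
  rintro ⟨r, i, j⟩ ⟨s, a, b⟩
  have hinner :
      inner ℂ (normalizedMatrixCoeff d π ⟨r, i, j⟩) (normalizedMatrixCoeff d π ⟨s, a, b⟩) =
        (√(d r / Fintype.card G) * √(d s / Fintype.card G) : ℝ) *
          ∑ z : G, π s z a b * starRingEnd ℂ (π r z i j) := by
    rw [inner_normalizedMatrixCoeff, Finset.mul_sum, Finset.mul_sum]
    refine Finset.sum_congr rfl fun z _ => ?_
    simp only [normalizedMatrixCoeff, WithLp.ofLp_toLp, Complex.ofReal_mul]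
    ring
  rw [hinner]
  rcases eq_or_ne r s with rfl | hrs
  · have hd : (d r : ℂ) ≠ 0 := Nat.cast_ne_zero.mpr i.pos.ne'
    have hG : (Fintype.card G : ℂ) ≠ 0 := Nat.cast_ne_zero.mpr Fintype.card_ne_zero
    rw [sum_mul_conj_eq_ite (hunit r) (hirr r), Real.mul_self_sqrt (by positivity),
      Fintype.card_fin]
    by_cases h : a = i ∧ b = j
    · obtain ⟨rfl, rfl⟩ := h
      simp [hd, hG]
    · rw [if_neg h, mul_zero, if_neg]
      simp only [Sigma.mk.injEq, heq_eq_eq, Prod.mk.injEq, true_and]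
      tauto
  · rw [sum_mul_conj_eq_zero (hunit r) (hneq s r hrs.symm), mul_zero, if_neg]
    exact fun h => hrs (congrArg Sigma.fst h)

lemma toLp_conv_gwavelet (hunit : ∀ r x, π r x ∈ Matrix.unitaryGroup (Fin (d r)) ℂ)
    (γ : Fin k → ℂ) (g : G → ℂ) :
    WithLp.toLp 2 (conv (gwavelet d π γ) g) =
      ∑ a, (γ a.1 * inner ℂ (normalizedMatrixCoeff d π a) (WithLp.toLp 2 g)) •
        normalizedMatrixCoeff d π a := by
  ext x
  have hsq (r : Fin k) : (√(d r / Fintype.card G) : ℂ) * √(d r / Fintype.card G) =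
      d r * (Fintype.card G : ℂ)⁻¹ := by
    rw [← Complex.ofReal_mul, Real.mul_self_sqrt (by positivity)]
    push_cast
    ring
  simp only [inner_normalizedMatrixCoeff]
  simp only [conv_apply_eq_sum_mul_inv, gwavelet_mul_inv hunit, WithLp.ofLp_sum,
    WithLp.ofLp_smul, Finset.sum_apply, Pi.smul_apply, smul_eq_mul,
    normalizedMatrixCoeff, Fintype.sum_sigma, Fintype.sum_prod_type,
    Finset.sum_mul, Finset.mul_sum]
  rw [Finset.sum_comm]
  refine Finset.sum_congr rfl fun r _ => ?_
  rw [Finset.sum_comm]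
  refine Finset.sum_congr rfl fun i _ => ?_
  rw [Finset.sum_comm]
  refine Finset.sum_congr rfl fun j _ => Finset.sum_congr rfl fun z _ => ?_
  linear_combination (-γ r * π r x i j * starRingEnd ℂ (π r z i j) * g z) * hsq r

theorem sum_nsq_conv_gwavelet_le {ι : Type*} [Fintype ι]
    (hunit : ∀ r x, π r x ∈ Matrix.unitaryGroup (Fin (d r)) ℂ)
    (hirr : ∀ (r : Fin k) (M : Matrix (Fin (d r)) (Fin (d r)) ℂ),
      (∀ x, M * π r x = π r x * M) → ∃ c : ℂ, M = c • (1 : Matrix (Fin (d r)) (Fin (d r)) ℂ))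
    (hneq : ∀ (r s : Fin k), r ≠ s → ∀ T : Matrix (Fin (d r)) (Fin (d s)) ℂ,
      (∀ x, π r x * T = T * π s x) → T = 0)
    (γ : ι → Fin k → ℂ) (hγ : ∀ r, ∑ j, Complex.normSq (γ j r) ≤ 1) (g : G → ℂ) :
    ∑ j, nsq (conv (gwavelet d π (γ j)) g) ≤ nsq g := by
  have hv := orthonormal_normalizedMatrixCoeff hunit hirr hneq
  set c := fun a => inner ℂ (normalizedMatrixCoeff d π a) (WithLp.toLp 2 g)
  have hnorm (j : ι) : ‖WithLp.toLp 2 (conv (gwavelet d π (γ j)) g)‖ ^ 2 =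
      ∑ a, ‖γ j a.1‖ ^ 2 * ‖c a‖ ^ 2 := by
    simpa [toLp_conv_gwavelet hunit, norm_mul, mul_pow] using
      hv.orthogonalFamily.norm_sum (fun a => γ j a.1 * c a) Finset.univ
  simp only [nsq_eq_inv_card_mul_norm_sq, ← Finset.mul_sum]
  gcongr
  calc ∑ j, ‖WithLp.toLp 2 (conv (gwavelet d π (γ j)) g)‖ ^ 2
      = ∑ a, (∑ j, ‖γ j a.1‖ ^ 2) * ‖c a‖ ^ 2 := by
        simp only [hnorm, Finset.sum_mul]
        exact Finset.sum_comm
    _ ≤ ∑ a, ‖c a‖ ^ 2 := by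
        gcongr with a
        exact mul_le_of_le_one_left (by positivity)
          (by simpa only [Complex.normSq_eq_norm_sq] using hγ a.1)
    _ ≤ ‖WithLp.toLp 2 g‖ ^ 2 := hv.sum_inner_products_le _

end Wavelets

lemma Fin.sum_pi_ofFn_zero {α M : Type*} [Fintype α] [AddCommMonoid M] (F : List α → M) :
    ∑ p : Fin 0 → α, F (List.ofFn p) = F [] := by
  rw [Fintype.sum_unique, List.ofFn_zero]

lemma Fin.sum_pi_ofFn_succ {α M : Type*} [Fintype α] [AddCommMonoid M]
    (F : List α → M) (m : ℕ) :
    ∑ p : Fin (m + 1) → α, F (List.ofFn p) = ∑ j, ∑ q : Fin m → α, F (j :: List.ofFn q) := by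
  rw [← Fintype.sum_prod_type', ← (Fin.consEquiv fun _ => α).sum_comp]
  simp [Fin.consEquiv, List.ofFn_succ]

section Scattering

variable {G : Type*} [Group G] [Fintype G] {J : ℕ}

theorem sum_range_nsq_conv_Upath_add_le (φ : G → ℂ) (ψ : Fin J → G → ℂ)
    (hstep : ∀ g, nsq (conv φ g) + ∑ j, nsq (fun x => ((‖conv (ψ j) g x‖ : ℝ) : ℂ)) ≤ nsq g)
    (m : ℕ) (f : G → ℂ) :
    ∑ i ∈ Finset.range m, ∑ p : Fin i → Fin J, nsq (conv φ (Upath ψ (List.ofFn p) f)) +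
      ∑ p : Fin m → Fin J, nsq (Upath ψ (List.ofFn p) f) ≤ nsq f := by
  induction m generalizing f with
  | zero => simp [Upath]
  | succ m ih =>
    -- Paths of length `m + 1` starting with `j` are the paths of length `m` applied to `|ψ j ∗ f|`.
    have hchildren := Finset.sum_le_sum fun j (_ : j ∈ Finset.univ) =>
      ih fun x => ((‖conv (ψ j) f x‖ : ℝ) : ℂ)
    rw [Finset.sum_add_distrib, Finset.sum_comm] at hchildren
    simp only [Finset.sum_range_succ', Fin.sum_pi_ofFn_zero fun l => nsq (conv φ (Upath ψ l f)),
      Fin.sum_pi_ofFn_succ fun l => nsq (Upath ψ l f),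
      Fin.sum_pi_ofFn_succ fun l => nsq (conv φ (Upath ψ l f)), Upath]
    linarith [hstep f]

end Scattering

theorem stmt10_general {G : Type*} [Group G] [Fintype G]
    {k : ℕ} (d : Fin k → ℕ)
    (π : (r : Fin k) → G →* Matrix (Fin (d r)) (Fin (d r)) ℂ)
    (hunit : ∀ r x, π r x ∈ Matrix.unitaryGroup (Fin (d r)) ℂ)
    (hirr : ∀ (r : Fin k) (M : Matrix (Fin (d r)) (Fin (d r)) ℂ),
      (∀ x, M * π r x = π r x * M) → ∃ c : ℂ, M = c • (1 : Matrix (Fin (d r)) (Fin (d r)) ℂ))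
    (hneq : ∀ (r s : Fin k), r ≠ s → ∀ T : Matrix (Fin (d r)) (Fin (d s)) ℂ,
      (∀ x, π r x * T = T * π s x) → T = 0)
    {J : ℕ} (γ : Fin (J + 1) → Fin k → ℂ)
    (hPar : ∀ r : Fin k, ∑ j : Fin (J + 1), Complex.normSq (γ j r) = 1)
    (f : G → ℂ) :
    ∑' m : ℕ, ∑ p : Fin m → Fin J, nsq (Sop d π γ (List.ofFn p) f) ≤ nsq f := by
  have hstep (g : G → ℂ) : nsq (conv (gwavelet d π (γ 0)) g) +
      ∑ j : Fin J, nsq (fun x => ((‖conv (gwavelet d π (γ j.succ)) g x‖ : ℝ) : ℂ)) ≤ nsq g := by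
    simpa only [Fin.sum_univ_succ, nsq_ofReal_norm] using
      sum_nsq_conv_gwavelet_le hunit hirr hneq γ (fun r => (hPar r).le) g
  refine Real.tsum_le_of_sum_range_le (fun m => Finset.sum_nonneg fun p _ => nsq_nonneg _)
    fun M => le_trans (le_add_of_nonneg_right (Finset.sum_nonneg fun p _ => nsq_nonneg _))
      (sum_range_nsq_conv_Upath_add_le _ _ hstep M f)

theorem stmt10 {G : Type*} [Group G] [Fintype G]
    {k : ℕ} (d : Fin k → ℕ) (hdpos : ∀ r, 0 < d r)
    (π : (r : Fin k) → G →* Matrix (Fin (d r)) (Fin (d r)) ℂ)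
    (hunit : ∀ r x, π r x ∈ Matrix.unitaryGroup (Fin (d r)) ℂ)
    (hirr : ∀ (r : Fin k) (M : Matrix (Fin (d r)) (Fin (d r)) ℂ),
      (∀ x, M * π r x = π r x * M) → ∃ c : ℂ, M = c • (1 : Matrix (Fin (d r)) (Fin (d r)) ℂ))
    (hneq : ∀ (r s : Fin k), r ≠ s → ∀ T : Matrix (Fin (d r)) (Fin (d s)) ℂ,
      (∀ x, π r x * T = T * π s x) → T = 0)
    (hcard : Nat.card (ConjClasses G) = k)
    {J : ℕ} (γ : Fin (J + 1) → Fin k → ℂ)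
    (hPar : ∀ r : Fin k, ∑ j : Fin (J + 1), Complex.normSq (γ j r) = 1)
    (f : G → ℂ) :
    ∑' m : ℕ, ∑ p : Fin m → Fin J, nsq (Sop d π γ (List.ofFn p) f) ≤ nsq f :=
  stmt10_general d π hunit hirr hneq γ hPar f
end
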